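/- arXiv:2001.00380 — 4 statements merged into one kernel-verified Lean document; each statement's English description precedes it below -/
import Mathlib

section
/- If ρ is congruent to jθ modulo one for some integer j, then the Sturmian number ξ₁ = ∑_{n≥1} s_{n-1}/bⁿ with s_n = ⌊(n+1)θ+ρ⌋ − ⌊nθ+ρ⌋ is a rational linear combination of 1 and the characteristic Sturmian number ξ₀ = ∑_{n≥1} c_n/bⁿ of the same slope θ; in particular 1, ξ₀, ξ₁ are linearly dependent over ℚ. -/
/-!
Extend the characteristic word to all indices, `c k = ⌊(k+1)θ⌋ - ⌊kθ⌋` for `k : ℤ`, and put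
`F k = ∑ c (n + k) / b^(n+1)`, so that `ξ₀ = F 1`. Since `ρ ≡ jθ (mod 1)`, the digits of `ξ₁` are
those of `c` shifted by `j`, i.e. `ξ₁ = F j`. The shift relation `b * F k = c k + F (k + 1)` moves
between consecutive `F k` by rational affine maps, so every `F k` lies in the `ℚ`-span of `1`
and `F 1`.
-/

open Submodule

noncomputable def sturmDigit (θ : ℝ) (k : ℤ) : ℤ := ⌊((k : ℝ) + 1) * θ⌋ - ⌊(k : ℝ) * θ⌋

noncomputable def sturmNumber (b : ℕ) (θ : ℝ) (k : ℤ) : ℝ :=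
  ∑' n : ℕ, (sturmDigit θ (n + k) : ℝ) / b ^ (n + 1)

lemma abs_floor_sub_floor_le {R : Type*} [Field R] [LinearOrder R] [IsStrictOrderedRing R]
    [FloorRing R] (x y : R) : |(⌊y⌋ : R) - ⌊x⌋| ≤ |y - x| + 1 := by
  have := Int.floor_le x; have := Int.floor_le y
  have := Int.lt_floor_add_one x; have := Int.lt_floor_add_one y
  rw [abs_le]; constructor <;> linarith [le_abs_self (y - x), neg_abs_le (y - x)]

lemma abs_sturmDigit_le (θ : ℝ) (k : ℤ) : |(sturmDigit θ k : ℝ)| ≤ |θ| + 1 := by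
  simpa [sturmDigit, add_mul] using abs_floor_sub_floor_le ((k : ℝ) * θ) ((k + 1) * θ)

lemma summable_sturmDigit_div_pow {b : ℕ} (hb : 2 ≤ b) (θ : ℝ) (k : ℤ) :
    Summable fun n : ℕ => (sturmDigit θ (n + k) : ℝ) / b ^ (n + 1) := by
  have hb' : (1 : ℝ) < b := by exact_mod_cast hb
  have hgeom : Summable fun n : ℕ => (|θ| + 1) * (b⁻¹ : ℝ) ^ (n + 1) :=
    ((summable_geometric_of_lt_one (by positivity) (inv_lt_one_of_one_lt₀ hb')).comp_injective
      (add_left_injective 1)).mul_left _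
  refine Summable.of_norm_bounded hgeom fun n => ?_
  rw [Real.norm_eq_abs, abs_div, abs_of_pos (by positivity : (0 : ℝ) < b ^ (n + 1)), inv_pow,
    ← div_eq_mul_inv]
  gcongr
  exact abs_sturmDigit_le θ _

lemma sturmNumber_eq_add {b : ℕ} (hb : 2 ≤ b) (θ : ℝ) (k : ℤ) :
    b * sturmNumber b θ k = sturmDigit θ k + sturmNumber b θ (k + 1) := by
  have hb0 : (b : ℝ) ≠ 0 := by positivity
  rw [sturmNumber, (summable_sturmDigit_div_pow hb θ k).tsum_eq_zero_add, mul_add,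
    ← tsum_mul_left, sturmNumber]
  congr 1
  · field_simp; simp
  · congr 1; ext n
    rw [pow_succ', ← div_div, mul_div_assoc', mul_div_cancel₀ _ hb0]
    push_cast; ring_nf

lemma sturmNumber_mem_span {b : ℕ} (hb : 2 ≤ b) (θ : ℝ) (k : ℤ) :
    sturmNumber b θ k ∈ span ℚ ({1, sturmNumber b θ 1} : Set ℝ) := by
  set S := span ℚ ({1, sturmNumber b θ 1} : Set ℝ)
  have hint (m : ℤ) : (m : ℝ) ∈ S := by
    simpa using S.smul_mem (m : ℚ) (subset_span (Set.mem_insert 1 _))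
  induction k using Int.inductionOn' (b := 1) with
  | zero => exact subset_span (Set.mem_insert_of_mem _ rfl)
  | succ k _ ih =>
    have h : sturmNumber b θ (k + 1) = (b : ℚ) • sturmNumber b θ k - sturmDigit θ k := by
      rw [Rat.smul_def, Rat.cast_natCast, sturmNumber_eq_add hb]; ring
    rw [h]
    exact S.sub_mem (S.smul_mem _ ih) (hint _)
  | pred k _ ih =>
    have h : sturmNumber b θ (k - 1) = (b⁻¹ : ℚ) • (sturmDigit θ (k - 1) + sturmNumber b θ k) := by
      have h := sturmNumber_eq_add hb θ (k - 1)
      rw [sub_add_cancel] at h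
      rw [Rat.smul_def, ← h]; push_cast; field_simp
    rw [h]
    exact S.smul_mem _ (S.add_mem (hint _) ih)

lemma sturmDigit_of_intercept (θ : ℝ) {ρ : ℝ} {j m : ℤ} (hρ : ρ = j * θ + m) (n : ℤ) :
    ⌊((n : ℝ) + 1) * θ + ρ⌋ - ⌊(n : ℝ) * θ + ρ⌋ = sturmDigit θ (n + j) := by
  have shift (x : ℝ) : ⌊x * θ + ρ⌋ = ⌊(x + j) * θ⌋ + m := by
    rw [hρ, ← Int.floor_add_intCast]; ring_nf
  rw [shift, shift, sturmDigit]; push_cast; ring_nf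

lemma not_linearIndependent_of_mem_span_pair {K V : Type*} [DivisionRing K] [AddCommGroup V]
    [Module K V] {x y z : V} (h : z ∈ span K ({x, y} : Set V)) :
    ¬ LinearIndependent K ![x, y, z] := fun hli => by
  have := hli.notMem_span_image (s := {0, 1}) (x := 2) (by decide)
  simp_all [Set.image_pair]

theorem stmt_2_general (b : ℕ) (hb : 2 ≤ b) (θ ρ : ℝ)
    (hcong : ∃ j m : ℤ, ρ = j * θ + m)
    (ξ₀ ξ₁ : ℝ)
    (hξ₀ : ξ₀ = ∑' n : ℕ, ((⌊((n : ℝ) + 2) * θ⌋ - ⌊((n : ℝ) + 1) * θ⌋ : ℤ) : ℝ) / b ^ (n + 1))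
    (hξ₁ : ξ₁ = ∑' n : ℕ, ((⌊((n : ℝ) + 1) * θ + ρ⌋ - ⌊(n : ℝ) * θ + ρ⌋ : ℤ) : ℝ) / b ^ (n + 1)) :
    (∃ p q : ℚ, ξ₁ = (p : ℝ) + (q : ℝ) * ξ₀) ∧
      ¬ LinearIndependent ℚ ![(1 : ℝ), ξ₀, ξ₁] := by
  obtain ⟨j, m, hρ⟩ := hcong
  have hξ₀' : ξ₀ = sturmNumber b θ 1 := by
    rw [hξ₀, sturmNumber]; congr! 3 with n
    simp only [sturmDigit]; push_cast; ring_nf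
  have hξ₁' : ξ₁ = sturmNumber b θ j := by
    rw [hξ₁, sturmNumber]; congr! 3 with n
    exact_mod_cast sturmDigit_of_intercept θ hρ n
  have hspan : ξ₁ ∈ span ℚ ({1, ξ₀} : Set ℝ) := by
    rw [hξ₀', hξ₁']; exact sturmNumber_mem_span hb θ j
  refine ⟨?_, not_linearIndependent_of_mem_span_pair hspan⟩
  obtain ⟨p, q, hpq⟩ := mem_span_pair.mp hspan
  exact ⟨p, q, by simp [← hpq, Rat.smul_def]⟩

theorem stmt_2 (b : ℕ) (hb : 2 ≤ b) (θ ρ : ℝ) (hθ : Irrational θ)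
    (h0 : 0 < θ) (h1 : θ < 1) (hρ0 : 0 ≤ ρ) (hρ1 : ρ < 1)
    (hcong : ∃ j m : ℤ, ρ = j * θ + m)
    (ξ₀ ξ₁ : ℝ)
    (hξ₀ : ξ₀ = ∑' n : ℕ, ((⌊((n : ℝ) + 2) * θ⌋ - ⌊((n : ℝ) + 1) * θ⌋ : ℤ) : ℝ) / b ^ (n + 1))
    (hξ₁ : ξ₁ = ∑' n : ℕ, ((⌊((n : ℝ) + 1) * θ + ρ⌋ - ⌊(n : ℝ) * θ + ρ⌋ : ℤ) : ℝ) / b ^ (n + 1)) :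
    (∃ p q : ℚ, ξ₁ = (p : ℝ) + (q : ℝ) * ξ₀) ∧
      ¬ LinearIndependent ℚ ![(1 : ℝ), ξ₀, ξ₁] :=
  stmt_2_general b hb θ ρ hcong ξ₀ ξ₁ hξ₀ hξ₁
end

section
/- With the standard words M_k defined by M₀ = a, M₁ = a^{a₁−1}b, M_k = (M_{k−1})^{a_k} M_{k−2}, the commutation relation M_{k−1} M_k^{−−} = M_k M_{k−1}^{−−} holds for all k ≥ 3, where W^{−−} denotes W with its last two letters removed. -/
/-- The standard words associated with a sequence of partial quotients. -/
def Mword {α : Type*} (a b : α) (aseq : ℕ → ℕ) : ℕ → List α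
  | 0 => [a]
  | 1 => List.replicate (aseq 1 - 1) a ++ [b]
  | (k + 2) => (List.replicate (aseq (k + 2)) (Mword a b aseq (k + 1))).flatten ++ Mword a b aseq k

/-!
Write `W⁻⁻` for `W` with its last two letters removed. The stronger identity
`(M_k M_{k+1})⁻⁻ = (M_{k+1} M_k)⁻⁻` holds for every `k ≥ 0`, by induction: for `k = 0` both sides
are `a^{a₁-1}`, and since `M_{k+2} = F M_k` with `F = M_{k+1}^{a_{k+2}}` commuting with `M_{k+1}`,
both `M_{k+1} M_{k+2}` and `M_{k+2} M_{k+1}` start with `F`, followed by `M_{k+1} M_k` resp.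
`M_k M_{k+1}`. As soon as `M_k` has at least two letters, which the positivity of the `a_i`
guarantees for `k ≥ 2`, removing the last two letters of `M_{k-1} M_k` only touches `M_k`.
-/

namespace List

variable {α : Type*}

theorem dropLast_dropLast_append (l₁ : List α) {l₂ : List α} (h : 2 ≤ l₂.length) :
    (l₁ ++ l₂).dropLast.dropLast = l₁ ++ l₂.dropLast.dropLast := by
  have h₂ : l₂ ≠ [] := ne_nil_of_length_pos (by omega)
  have h₂' : l₂.dropLast ≠ [] := ne_nil_of_length_pos (by rw [length_dropLast]; omega)
  rw [dropLast_append_of_ne_nil h₂, dropLast_append_of_ne_nil h₂']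

theorem append_flatten_replicate_self (l : List α) (n : ℕ) :
    l ++ (replicate n l).flatten = (replicate n l).flatten ++ l := by
  rw [← flatten_cons, ← replicate_succ, replicate_succ', flatten_append, flatten_singleton]

end List

section StandardWords

variable {α : Type*} (a b : α) (aseq : ℕ → ℕ)

theorem Mword_ne_nil : ∀ k, Mword a b aseq k ≠ []
  | 0 => by simp [Mword]
  | 1 => by simp [Mword]
  | k + 2 => by simp [Mword, Mword_ne_nil k]

theorem two_le_length_Mword {k : ℕ} (hk : 1 ≤ aseq (k + 2)) :
    2 ≤ (Mword a b aseq (k + 2)).length := by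
  have h₁ := List.length_pos_iff.mpr (Mword_ne_nil a b aseq (k + 1))
  have h₀ := List.length_pos_iff.mpr (Mword_ne_nil a b aseq k)
  simp only [Mword, List.length_append, List.length_flatten, List.map_replicate,
    List.sum_replicate, smul_eq_mul]
  nlinarith

theorem dropLast_dropLast_Mword_append_comm : ∀ k,
    (Mword a b aseq k ++ Mword a b aseq (k + 1)).dropLast.dropLast
      = (Mword a b aseq (k + 1) ++ Mword a b aseq k).dropLast.dropLast
  | 0 => by
    rw [Mword, Mword, List.singleton_append, ← List.cons_append, ← List.replicate_succ,
      List.replicate_succ', List.append_assoc, List.append_assoc]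
    simp
  | k + 1 => by
    have h₁ := List.length_pos_iff.mpr (Mword_ne_nil a b aseq (k + 1))
    have h₀ := List.length_pos_iff.mpr (Mword_ne_nil a b aseq k)
    have hlen : 2 ≤ (Mword a b aseq (k + 1) ++ Mword a b aseq k).length := by
      rw [List.length_append]; omega
    have hlen' : 2 ≤ (Mword a b aseq k ++ Mword a b aseq (k + 1)).length := by
      rw [List.length_append]; omega
    set F := (List.replicate (aseq (k + 2)) (Mword a b aseq (k + 1))).flatten
    have hM : Mword a b aseq (k + 2) = F ++ Mword a b aseq k := rfl
    calc (Mword a b aseq (k + 1) ++ Mword a b aseq (k + 2)).dropLast.dropLast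
        = F ++ (Mword a b aseq (k + 1) ++ Mword a b aseq k).dropLast.dropLast := by
          rw [hM, ← List.append_assoc, List.append_flatten_replicate_self, List.append_assoc,
            List.dropLast_dropLast_append _ hlen]
      _ = F ++ (Mword a b aseq k ++ Mword a b aseq (k + 1)).dropLast.dropLast := by
          rw [dropLast_dropLast_Mword_append_comm k]
      _ = (Mword a b aseq (k + 2) ++ Mword a b aseq (k + 1)).dropLast.dropLast := by
          rw [hM, List.append_assoc, List.dropLast_dropLast_append _ hlen']

end StandardWords

theorem stmt_4_general {α : Type*} (a b : α) (aseq : ℕ → ℕ)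
    (hpos : ∀ i, 1 ≤ i → 1 ≤ aseq i) (k : ℕ) (hk : 3 ≤ k) :
    Mword a b aseq (k - 1) ++ (Mword a b aseq k).dropLast.dropLast
      = Mword a b aseq k ++ (Mword a b aseq (k - 1)).dropLast.dropLast := by
  obtain ⟨m, rfl⟩ : ∃ m, k = m + 3 := ⟨k - 3, by omega⟩
  have key := dropLast_dropLast_Mword_append_comm a b aseq (m + 2)
  rw [List.dropLast_dropLast_append _ (two_le_length_Mword a b aseq (hpos (m + 3) (by omega))),
    List.dropLast_dropLast_append _ (two_le_length_Mword a b aseq (hpos (m + 2) (by omega)))]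
    at key
  exact key

theorem stmt_4 {α : Type*} (a b : α) (hab : a ≠ b) (aseq : ℕ → ℕ)
    (hpos : ∀ i, 1 ≤ i → 1 ≤ aseq i) (k : ℕ) (hk : 3 ≤ k) :
    Mword a b aseq (k - 1) ++ (Mword a b aseq k).dropLast.dropLast
      = Mword a b aseq k ++ (Mword a b aseq (k - 1)).dropLast.dropLast :=
  stmt_4_general a b aseq hpos k hk
end

section
/- With φ as above and ξ_{y,λ} = ∑_{k≥1}(⌈y + (k+1)θ⌉ − ⌈y + kθ⌉) λᵏ, for any real y one has φ(y) = 1 + ξ_{0,λ} + ⌊y − θ⌋ − ξ_{−y,λ}. -/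
/-- The value `δ(λ,θ) = (1-λ)(1 + ∑_{k≥1}(⌊(k+1)θ⌋ - ⌊kθ⌋)λᵏ)`. -/
noncomputable def deltaLT (lam θ : ℝ) : ℝ :=
  (1 - lam) * (1 + ∑' k : ℕ,
    ((⌊((k : ℝ) + 2) * θ⌋ - ⌊((k : ℝ) + 1) * θ⌋ : ℤ) : ℝ) * lam ^ (k + 1))

/-- The function `φ(y) = δ(λ,θ)/(1-λ) + (1-λ) ∑_{k≥0} ⌊y-(k+1)θ⌋ λᵏ`. -/
noncomputable def phiLT (lam θ y : ℝ) : ℝ :=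
  deltaLT lam θ / (1 - lam) + (1 - lam) * ∑' k : ℕ,
    ((⌊y - ((k : ℝ) + 1) * θ⌋ : ℤ) : ℝ) * lam ^ k

/-- The value `ξ_{y,λ} = ∑_{k≥1}(⌈y+(k+1)θ⌉ - ⌈y+kθ⌉)λᵏ`. -/
noncomputable def xiLT (lam θ y : ℝ) : ℝ :=
  ∑' k : ℕ, ((⌈y + ((k : ℝ) + 2) * θ⌉ - ⌈y + ((k : ℝ) + 1) * θ⌉ : ℤ) : ℝ) * lam ^ (k + 1)

/-!
Since every `(k+1)θ` is irrational, `⌈(k+1)θ⌉ = ⌊(k+1)θ⌋ + 1`, so `δ(λ,θ)/(1-λ) = 1 + ξ_{0,λ}`.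
With `a_k = ⌊y - (k+1)θ⌋` one has `⌈-y + (k+1)θ⌉ = -a_k`, so `ξ_{-y,λ} = ∑ (a_k - a_{k+1}) λ^{k+1}`,
and summation by parts turns this into `a_0 - (1-λ) ∑ a_k λ^k`, which is the series part of `φ(y)`.
-/

theorem Irrational.ceil_eq_floor_add_one {x : ℝ} (hx : Irrational x) : ⌈x⌉ = ⌊x⌋ + 1 :=
  (Int.ceil_eq_floor_add_one_iff_notMem x).2 fun ⟨n, hn⟩ => hx.ne_int n hn.symm

theorem tsum_sub_succ_mul_pow_succ {K : Type*} [Field K] [TopologicalSpace K]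
    [IsTopologicalRing K] [T2Space K] {a : ℕ → K} {r : K}
    (ha : Summable fun k => a k * r ^ k) :
    ∑' k, (a k - a (k + 1)) * r ^ (k + 1) = a 0 - (1 - r) * ∑' k, a k * r ^ k := by
  have hshift : Summable fun k => a (k + 1) * r ^ (k + 1) :=
    (summable_nat_add_iff (f := fun k => a k * r ^ k) 1).2 ha
  have hmul : Summable fun k => a k * r ^ (k + 1) := (ha.mul_left r).congr fun k => by ring
  calc ∑' k, (a k - a (k + 1)) * r ^ (k + 1)
      = ∑' k, a k * r ^ (k + 1) - ∑' k, a (k + 1) * r ^ (k + 1) := by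
        simp_rw [sub_mul]; exact hmul.tsum_sub hshift
    _ = r * ∑' k, a k * r ^ k - (∑' k, a k * r ^ k - a 0) := by
        rw [← tsum_mul_left, ha.tsum_eq_zero_add]
        simp only [pow_zero, mul_one, pow_succ]
        congr 1
        · exact tsum_congr fun k => by ring
        · ring
    _ = a 0 - (1 - r) * ∑' k, a k * r ^ k := by ring

theorem summable_mul_geometric_of_abs_le_linear {b : ℕ → ℝ} {r C D : ℝ} (hr : |r| < 1)
    (hb : ∀ k, |b k| ≤ C + D * k) : Summable fun k => b k * r ^ k := by
  have hlin : Summable fun k : ℕ => (C + D * k) * |r| ^ k := by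
    have hr' : ‖|r|‖ < 1 := by rwa [Real.norm_eq_abs, abs_abs]
    simpa [add_mul, mul_assoc] using
      ((summable_geometric_of_lt_one (abs_nonneg r) hr).mul_left C).add
        ((summable_pow_mul_geometric_of_norm_lt_one 1 hr').mul_left D)
  refine Summable.of_norm_bounded hlin fun k => ?_
  rw [Real.norm_eq_abs, abs_mul, abs_pow]
  exact mul_le_mul_of_nonneg_right (hb k) (by positivity)

theorem summable_floor_sub_mul_geometric (θ y : ℝ) {r : ℝ} (hr : |r| < 1) :
    Summable fun k : ℕ => ((⌊y - ((k : ℝ) + 1) * θ⌋ : ℤ) : ℝ) * r ^ k := by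
  refine summable_mul_geometric_of_abs_le_linear (C := |y| + |θ| + 1) (D := |θ|) hr fun k => ?_
  have hfloor : |(⌊y - ((k : ℝ) + 1) * θ⌋ : ℝ)| ≤ |y - ((k : ℝ) + 1) * θ| + 1 := by
    rw [abs_le]
    constructor <;> cases abs_cases (y - ((k : ℝ) + 1) * θ) <;>
      linarith [Int.floor_le (y - ((k : ℝ) + 1) * θ), Int.sub_one_lt_floor (y - ((k : ℝ) + 1) * θ)]
  calc |(⌊y - ((k : ℝ) + 1) * θ⌋ : ℝ)| ≤ |y - ((k : ℝ) + 1) * θ| + 1 := hfloor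
    _ ≤ |y| + |((k : ℝ) + 1) * θ| + 1 := by gcongr; exact abs_sub _ _
    _ = |y| + |θ| + 1 + |θ| * k := by
        rw [abs_mul, abs_of_nonneg (by positivity : (0 : ℝ) ≤ (k : ℝ) + 1)]; ring

theorem deltaLT_div_one_sub {lam θ : ℝ} (hθ : Irrational θ) (hlam : lam ≠ 1) :
    deltaLT lam θ / (1 - lam) = 1 + xiLT lam θ 0 := by
  have hceil (n : ℕ) (hn : n ≠ 0) : ⌈(n : ℝ) * θ⌉ = ⌊(n : ℝ) * θ⌋ + 1 :=
    (hθ.natCast_mul hn).ceil_eq_floor_add_one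
  rw [deltaLT, mul_div_cancel_left₀ _ (sub_ne_zero.2 hlam.symm), xiLT]
  congr 1
  refine tsum_congr fun k => ?_
  have h2 := hceil (k + 2) (by omega)
  have h1 := hceil (k + 1) (by omega)
  push_cast at h1 h2
  rw [zero_add, zero_add, h1, h2]
  push_cast
  ring

-- The cast `((k + 1 : ℕ) : ℝ)` keeps the summand in the shape `a k - a (k + 1)`.
theorem xiLT_neg (lam θ y : ℝ) :
    xiLT lam θ (-y) = ∑' k : ℕ, (((⌊y - ((k : ℝ) + 1) * θ⌋ : ℤ) : ℝ)
      - ((⌊y - (((k + 1 : ℕ) : ℝ) + 1) * θ⌋ : ℤ) : ℝ)) * lam ^ (k + 1) := by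
  refine tsum_congr fun k => ?_
  simp only [show ∀ x : ℝ, -y + x = -(y - x) from fun x => by ring, Int.ceil_neg]
  push_cast
  ring_nf

theorem stmt_12_general (lam θ : ℝ) (hl0 : 0 < lam) (hl1 : lam < 1)
    (hθ : Irrational θ) (y : ℝ) :
    phiLT lam θ y = 1 + xiLT lam θ 0 + (⌊y - θ⌋ : ℝ) - xiLT lam θ (-y) := by
  have hS := summable_floor_sub_mul_geometric θ y (r := lam) (abs_lt.2 ⟨by linarith, hl1⟩)
  rw [phiLT, deltaLT_div_one_sub hθ hl1.ne, xiLT_neg, tsum_sub_succ_mul_pow_succ hS]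
  simp only [Nat.cast_zero, zero_add, one_mul]
  ring

theorem stmt_12 (lam θ : ℝ) (hl0 : 0 < lam) (hl1 : lam < 1)
    (hθ : Irrational θ) (h0 : 0 < θ) (h1 : θ < 1) (y : ℝ) :
    phiLT lam θ y = 1 + xiLT lam θ 0 + (⌊y - θ⌋ : ℝ) - xiLT lam θ (-y) :=
  stmt_12_general lam θ hl0 hl1 hθ y
end

section
/- With φ as above, for every integer l ≥ 1: φ({−lθ}) = ((1−λ^{−l})/(1−λ)) δ(λ,θ) + λ^{−l} + ∑_{k=1}^{l−1} λ^{k−l}(⌊(k+1)θ⌋ − ⌊kθ⌋). -/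
/-! Write `wₖ = ⌊(k+1)θ⌋ - ⌊kθ⌋` (the lower mechanical word of slope `θ`) and `S = ∑ₖ wₖ λᵏ`;
since `w₀ = 0`, `δ = (1-λ)(1 + S)`. For irrational `θ`, applying `⌊-x⌋ = -⌊x⌋ - 1` at `x = lθ` and
`x = (l+k+1)θ` gives `⌊{-lθ} - (k+1)θ⌋ = ⌊lθ⌋ - ⌊(l+k+1)θ⌋ = -(w_l + ⋯ + w_{l+k})`. Against `λᵏ`
these partial sums add up to `-T/(1-λ)` with `T = ∑ₖ w_{l+k} λᵏ`, so `φ({-lθ}) = 1 + S - T`.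
Splitting `S = ∑_{k<l} wₖ λᵏ + λˡ T` and eliminating `T` gives the formula. -/

noncomputable def lowerMechanicalWord (θ : ℝ) (k : ℕ) : ℝ :=
  ((⌊((k : ℝ) + 1) * θ⌋ - ⌊(k : ℝ) * θ⌋ : ℤ) : ℝ)

open Finset

theorem Irrational.floor_neg {x : ℝ} (hx : Irrational x) : ⌊-x⌋ = -⌊x⌋ - 1 := by
  rw [Int.floor_neg,
    (Int.ceil_eq_floor_add_one_iff_notMem x).2 fun ⟨m, hm⟩ => hx.ne_int m hm.symm]
  ring

theorem Irrational.floor_fract_neg_sub {x y : ℝ} (hx : Irrational x) (hxy : Irrational (x + y)) :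
    ⌊Int.fract (-x) - y⌋ = ⌊x⌋ - ⌊x + y⌋ := by
  have h : Int.fract (-x) - y = -(x + y) - ⌊-x⌋ := by rw [Int.fract]; ring
  rw [h, Int.floor_sub_intCast, hxy.floor_neg, hx.floor_neg]
  ring

theorem tsum_sum_range_mul_geometric {𝕜 : Type*} [NormedField 𝕜] [CompleteSpace 𝕜]
    {b : ℕ → 𝕜} {r : 𝕜} (hr : ‖r‖ < 1) (hb : Summable fun n => ‖b n * r ^ n‖) :
    ∑' n, (∑ j ∈ range (n + 1), b j) * r ^ n = (∑' n, b n * r ^ n) * (1 - r)⁻¹ := by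
  rw [← tsum_geometric_of_norm_lt_one hr,
    tsum_mul_tsum_eq_tsum_sum_range_of_summable_norm hb (summable_norm_geometric_of_norm_lt_one hr)]
  refine tsum_congr fun n => ?_
  rw [sum_mul]
  refine sum_congr rfl fun j hj => ?_
  rw [mul_assoc, ← pow_add, Nat.add_sub_cancel' (mem_range_succ_iff.1 hj)]

namespace lowerMechanicalWord

variable {θ : ℝ}

theorem nonneg (hθ : 0 ≤ θ) (k : ℕ) : 0 ≤ lowerMechanicalWord θ k := by
  have : ⌊(k : ℝ) * θ⌋ ≤ ⌊((k : ℝ) + 1) * θ⌋ := Int.floor_le_floor (by nlinarith)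
  unfold lowerMechanicalWord
  exact_mod_cast Int.sub_nonneg_of_le this

theorem le_one (hθ : θ ≤ 1) (k : ℕ) : lowerMechanicalWord θ k ≤ 1 := by
  have : ⌊((k : ℝ) + 1) * θ⌋ ≤ ⌊(k : ℝ) * θ + 1⌋ := Int.floor_le_floor (by nlinarith)
  rw [Int.floor_add_one] at this
  unfold lowerMechanicalWord
  exact_mod_cast (by omega : ⌊((k : ℝ) + 1) * θ⌋ - ⌊(k : ℝ) * θ⌋ ≤ 1)

theorem zero (h0 : 0 ≤ θ) (h1 : θ < 1) : lowerMechanicalWord θ 0 = 0 := by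
  simp [lowerMechanicalWord, Int.floor_eq_zero_iff.2 ⟨h0, h1⟩]

theorem sum_range_add (m n : ℕ) :
    ∑ j ∈ range n, lowerMechanicalWord θ (m + j)
      = ((⌊((m : ℝ) + n) * θ⌋ - ⌊(m : ℝ) * θ⌋ : ℤ) : ℝ) := by
  have h := sum_range_sub (fun j => (⌊((m : ℝ) + j) * θ⌋ : ℝ)) n
  simp only [Nat.cast_add_one, Nat.cast_zero, add_zero] at h
  rw [Int.cast_sub, ← h]
  refine sum_congr rfl fun j _ => ?_
  simp only [lowerMechanicalWord]
  push_cast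
  ring_nf

theorem summable_norm_mul_pow (h0 : 0 ≤ θ) (h1 : θ ≤ 1) {r : ℝ} (hr : ‖r‖ < 1) (m : ℕ) :
    Summable fun k => ‖lowerMechanicalWord θ (m + k) * r ^ k‖ := by
  refine (summable_norm_geometric_of_norm_lt_one hr).of_nonneg_of_le (fun _ => norm_nonneg _)
    fun k => ?_
  rw [norm_mul]
  refine mul_le_of_le_one_left (norm_nonneg _) ?_
  rw [Real.norm_of_nonneg (nonneg h0 _)]
  exact le_one h1 _

theorem tsum_mul_pow_eq (h0 : 0 ≤ θ) (h1 : θ ≤ 1) {r : ℝ} (hr : ‖r‖ < 1) (l : ℕ) :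
    ∑' k, lowerMechanicalWord θ k * r ^ k
      = ∑ k ∈ range l, lowerMechanicalWord θ k * r ^ k
        + r ^ l * ∑' k, lowerMechanicalWord θ (l + k) * r ^ k := by
  have hs := (summable_norm_mul_pow h0 h1 hr 0).of_norm
  simp only [zero_add] at hs
  rw [← hs.sum_add_tsum_nat_add l, ← tsum_mul_left]
  congr 1
  refine tsum_congr fun k => ?_
  rw [add_comm k l, pow_add]
  ring

end lowerMechanicalWord

theorem deltaLT_eq {θ : ℝ} (lam : ℝ) (h0 : 0 ≤ θ) (h1 : θ < 1) :
    deltaLT lam θ = (1 - lam) * (1 + ∑' k, lowerMechanicalWord θ k * lam ^ k) := by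
  have hshift := tsum_pnat_eq_tsum_succ (f := fun k => lowerMechanicalWord θ k * lam ^ k)
  rw [tsum_pnat_eq_tsum_of_eq_zero (f := fun k => lowerMechanicalWord θ k * lam ^ k)
    (by simp [lowerMechanicalWord.zero h0 h1])] at hshift
  rw [deltaLT, hshift]
  congr 3
  ext k
  simp only [lowerMechanicalWord]
  push_cast
  ring_nf

theorem phiLT_fract_neg_mul {lam θ : ℝ} (hlam : ‖lam‖ < 1) (hθ : Irrational θ) (h0 : 0 < θ)
    (h1 : θ < 1) {l : ℕ} (hl : l ≠ 0) :
    phiLT lam θ (Int.fract (-(l : ℝ) * θ))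
      = 1 + ∑' k, lowerMechanicalWord θ k * lam ^ k
        - ∑' k, lowerMechanicalWord θ (l + k) * lam ^ k := by
  have hlam1 : 1 - lam ≠ 0 := (sub_pos.2 ((le_abs_self lam).trans_lt hlam)).ne'
  have hfloor (k : ℕ) : ((⌊Int.fract (-(l : ℝ) * θ) - ((k : ℝ) + 1) * θ⌋ : ℤ) : ℝ)
      = -∑ j ∈ range (k + 1), lowerMechanicalWord θ (l + j) := by
    have hsum : (l : ℝ) * θ + ((k : ℝ) + 1) * θ = ((l : ℝ) + ((k + 1 : ℕ) : ℝ)) * θ := by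
      push_cast; ring
    have hirr : Irrational ((l : ℝ) * θ + ((k : ℝ) + 1) * θ) := by
      rw [hsum, ← Nat.cast_add]
      exact hθ.natCast_mul (by omega)
    rw [neg_mul, (hθ.natCast_mul hl).floor_fract_neg_sub hirr, hsum,
      lowerMechanicalWord.sum_range_add]
    push_cast
    ring
  have hseries : ∑' k : ℕ, ((⌊Int.fract (-(l : ℝ) * θ) - ((k : ℝ) + 1) * θ⌋ : ℤ) : ℝ) * lam ^ k
      = -((∑' k, lowerMechanicalWord θ (l + k) * lam ^ k) * (1 - lam)⁻¹) := by
    simp_rw [hfloor, neg_mul, tsum_neg,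
      tsum_sum_range_mul_geometric hlam
        (lowerMechanicalWord.summable_norm_mul_pow h0.le h1.le hlam l)]
  rw [phiLT, hseries, deltaLT_eq lam h0.le h1]
  field_simp
  ring

theorem stmt_13 (lam θ : ℝ) (hl0 : 0 < lam) (hl1 : lam < 1)
    (hθ : Irrational θ) (h0 : 0 < θ) (h1 : θ < 1) (l : ℕ) (hl : 1 ≤ l) :
    phiLT lam θ (Int.fract (-(l : ℝ) * θ))
      = (1 - lam ^ (-(l : ℤ))) / (1 - lam) * deltaLT lam θ + lam ^ (-(l : ℤ))
        + ∑ k ∈ Finset.Icc 1 (l - 1),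
            lam ^ ((k : ℤ) - (l : ℤ))
              * ((⌊((k : ℝ) + 1) * θ⌋ - ⌊(k : ℝ) * θ⌋ : ℤ) : ℝ) := by
  have hlam : ‖lam‖ < 1 := by rwa [Real.norm_of_nonneg hl0.le]
  have hIcc : ∑ k ∈ Icc 1 (l - 1), lam ^ ((k : ℤ) - (l : ℤ)) * lowerMechanicalWord θ k
      = (lam ^ l)⁻¹ * ∑ k ∈ range l, lowerMechanicalWord θ k * lam ^ k := by
    rw [Icc_sub_one_right_eq_Ico_of_not_isMin (not_isMin_of_lt hl), range_eq_Ico,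
      sum_eq_sum_Ico_succ_bot (show 0 < l by omega), lowerMechanicalWord.zero h0.le h1, zero_mul,
      zero_add, mul_sum]
    refine sum_congr rfl fun k _ => ?_
    rw [zpow_sub₀ hl0.ne', zpow_natCast, zpow_natCast]
    ring
  have hlam1 : 1 - lam ≠ 0 := sub_ne_zero.2 hl1.ne'
  change _ = _ + ∑ k ∈ Icc 1 (l - 1), lam ^ ((k : ℤ) - (l : ℤ)) * lowerMechanicalWord θ k
  rw [phiLT_fract_neg_mul hlam hθ h0 h1 (by omega), hIcc, deltaLT_eq lam h0.le h1,
    lowerMechanicalWord.tsum_mul_pow_eq h0.le h1.le hlam l, zpow_neg, zpow_natCast]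
  field_simp
  ring
end
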